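/- arXiv:2407.08169 — 2 statements merged into one kernel-verified Lean document; each statement's English description precedes it below -/
import Mathlib

section
/- Let E be a finite-dimensional real inner product space, let μ > 0, and let φ₁, φ₂ : E → ℝ be μ-strongly convex functions with minimizers x₁ ∈ argmin φ₁ and x₂ ∈ argmin φ₂. If the difference φ₂ − φ₁ is differentiable, then (μ/2)‖x₁ − x₂‖² ≤ |⟨x₁ − x₂, ∇(φ₂ − φ₁)(x₁)⟩|. -/
/-!
Along the segment `t ↦ x₁ + t • (x₂ - x₁)`, strong convexity of `φ₂` together with quadratic
growth of `φ₁` at `x₁` and of `φ₂` at `x₂` bounds the increment of `ψ = φ₂ - φ₁` by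
`-t μ ‖x₁ - x₂‖²`. Letting `t → 0⁺` turns this into `⟪∇ψ(x₁), x₂ - x₁⟫ ≤ -μ ‖x₁ - x₂‖²`,
which is twice as strong as the claim.
-/

open Filter Topology RealInnerProductSpace

section StrongConvexOn

variable {E : Type*} [NormedAddCommGroup E] [NormedSpace ℝ E] {s : Set E} {m : ℝ}

theorem StrongConvexOn.add_sq_norm_sub_le_of_isMinOn {f : E → ℝ} {x y : E}
    (hf : StrongConvexOn s m f) (hx : IsMinOn f s x) (hxs : x ∈ s) (hys : y ∈ s) :
    f x + m / 2 * ‖x - y‖ ^ 2 ≤ f y := by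
  have hbound : ∀ t ∈ Set.Ioo (0 : ℝ) 1, (1 - t) * (m / 2 * ‖x - y‖ ^ 2) ≤ f y - f x := by
    rintro t ⟨ht₀, ht₁⟩
    have hts : (1 - t) • x + t • y ∈ s := hf.1 hxs hys (sub_nonneg.2 ht₁.le) ht₀.le (by ring)
    have hconv := hf.2 hxs hys (sub_nonneg.2 ht₁.le) ht₀.le (sub_add_cancel 1 t)
    have hmin := isMinOn_iff.1 hx _ hts
    simp only [smul_eq_mul] at hconv
    refine le_of_mul_le_mul_left ?_ ht₀
    linear_combination hmin.trans hconv
  have hlim : Tendsto (fun t : ℝ ↦ (1 - t) * (m / 2 * ‖x - y‖ ^ 2)) (𝓝[>] 0)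
      (𝓝 (m / 2 * ‖x - y‖ ^ 2)) := by
    have : Continuous fun t : ℝ ↦ (1 - t) * (m / 2 * ‖x - y‖ ^ 2) := by fun_prop
    simpa using (this.tendsto 0).mono_left nhdsWithin_le_nhds
  have := le_of_tendsto hlim (eventually_of_mem (Ioo_mem_nhdsGT one_pos) hbound)
  linarith

theorem StrongConvexOn.sub_increment_le_of_isMinOn {φ₁ φ₂ : E → ℝ} {x₁ x₂ : E} {t : ℝ}
    (h₁ : StrongConvexOn s m φ₁) (h₂ : StrongConvexOn s m φ₂)
    (hx₁ : IsMinOn φ₁ s x₁) (hx₂ : IsMinOn φ₂ s x₂) (hx₁s : x₁ ∈ s) (hx₂s : x₂ ∈ s)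
    (ht₀ : 0 ≤ t) (ht₁ : t ≤ 1) :
    φ₂ (x₁ + t • (x₂ - x₁)) - φ₁ (x₁ + t • (x₂ - x₁)) - (φ₂ x₁ - φ₁ x₁)
      ≤ t * -(m * ‖x₁ - x₂‖ ^ 2) := by
  have hy : x₁ + t • (x₂ - x₁) = (1 - t) • x₁ + t • x₂ := by
    rw [smul_sub, sub_smul, one_smul]; abel
  have hys : x₁ + t • (x₂ - x₁) ∈ s := hy ▸ h₁.1 hx₁s hx₂s (sub_nonneg.2 ht₁) ht₀ (by ring)
  have hconv := h₂.2 hx₁s hx₂s (sub_nonneg.2 ht₁) ht₀ (sub_add_cancel 1 t)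
  have hgrow₁ := h₁.add_sq_norm_sub_le_of_isMinOn hx₁ hx₁s hys
  have hgrow₂ := h₂.add_sq_norm_sub_le_of_isMinOn hx₂ hx₂s hx₁s
  rw [← hy, smul_eq_mul, smul_eq_mul] at hconv
  rw [sub_add_cancel_left, norm_neg, norm_smul, Real.norm_of_nonneg ht₀, norm_sub_rev x₂]
    at hgrow₁
  rw [norm_sub_rev] at hgrow₂
  linear_combination hconv + hgrow₁ + mul_le_mul_of_nonneg_left hgrow₂ ht₀

end StrongConvexOn

theorem HasGradientAt.inner_le_of_eventually_sub_le {E : Type*} [NormedAddCommGroup E]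
    [InnerProductSpace ℝ E] [CompleteSpace E] {f : E → ℝ} {g x v : E} {c : ℝ}
    (hf : HasGradientAt f g x) (hc : ∀ᶠ t in 𝓝[>] 0, f (x + t • v) - f x ≤ t * c) :
    ⟪g, v⟫ ≤ c := by
  have hline := (hasGradientAt_iff_hasFDerivAt.1 hf).hasLineDerivAt v
  refine le_of_tendsto hline.tendsto_slope_zero_right ?_
  filter_upwards [hc, self_mem_nhdsWithin] with t ht ht₀
  rw [smul_eq_mul, inv_mul_le_iff₀ ht₀]
  exact ht

/-- **Optimizer comparison lemma.** If `φ₁, φ₂` are `μ`-strongly convex on a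
finite-dimensional real inner product space with minimizers `x₁, x₂`, and the
difference `φ₂ - φ₁` is differentiable (with gradient `g`), then
`(μ/2)‖x₁ - x₂‖² ≤ |⟨x₁ - x₂, ∇(φ₂ - φ₁)(x₁)⟩|`. -/
theorem optimizer_comparison
    {E : Type*} [NormedAddCommGroup E] [InnerProductSpace ℝ E] [FiniteDimensional ℝ E]
    {μ : ℝ} (hμ : 0 < μ) (φ₁ φ₂ : E → ℝ)
    (h₁ : StrongConvexOn Set.univ μ φ₁) (h₂ : StrongConvexOn Set.univ μ φ₂)
    (x₁ x₂ : E) (hx₁ : ∀ y, φ₁ x₁ ≤ φ₁ y) (hx₂ : ∀ y, φ₂ x₂ ≤ φ₂ y)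
    (g : E → E) (hg : ∀ x, HasGradientAt (fun z => φ₂ z - φ₁ z) (g x) x) :
    μ / 2 * ‖x₁ - x₂‖ ^ 2 ≤ |⟪x₁ - x₂, g x₁⟫| := by
  have hdir : ⟪g x₁, x₂ - x₁⟫ ≤ -(μ * ‖x₁ - x₂‖ ^ 2) :=
    (hg x₁).inner_le_of_eventually_sub_le <|
      eventually_of_mem (Ioo_mem_nhdsGT one_pos) fun t ht ↦
        h₁.sub_increment_le_of_isMinOn h₂ (isMinOn_univ_iff.2 hx₁) (isMinOn_univ_iff.2 hx₂)
          trivial trivial ht.1.le ht.2.le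
  have hswap : ⟪x₁ - x₂, g x₁⟫ = -⟪g x₁, x₂ - x₁⟫ := by
    rw [real_inner_comm, ← inner_neg_right, neg_sub]
  calc μ / 2 * ‖x₁ - x₂‖ ^ 2 ≤ μ * ‖x₁ - x₂‖ ^ 2 := by gcongr; linarith
    _ ≤ ⟪x₁ - x₂, g x₁⟫ := by linarith
    _ ≤ |⟪x₁ - x₂, g x₁⟫| := le_abs_self _
end

section
/- In the weighted empirical risk minimization setting, suppose each function θ ↦ (1/n)ℓ(z_i, θ) is differentiable and that both L(·, 𝟙) and L(·, 𝟙^{n∖i}) are μ-strongly convex (μ > 0) with minimizers θ̂(𝟙) and θ̂(𝟙^{n∖i}). Then for every i ∈ {1,…,n}, ‖θ̂(𝟙^{n∖i}) − θ̂(𝟙)‖ ≤ (2/(nμ))‖∇_θ ℓ(z_i, θ̂(𝟙))‖; in particular, ‖θ̂(𝟙^{n∖i}) − θ̂(𝟙)‖ ≤ (2/μ) · max_{i∈[n]} ‖(1/n)∇_θ ℓ(z_i, θ̂(𝟙))‖. -/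
/-!
Write `F` for the leave-one-out risk and `f = (1/n) ℓ(z_i, ·)`, so that `L(·, 𝟙) = F + f`, and put
`δ = θ̂(𝟙^{n∖i}) - θ̂(𝟙)`. On the segment `θ̂(𝟙) + tδ`, strong convexity of `F` together with
`F(θ̂(𝟙^{n∖i})) ≤ F(θ̂(𝟙))` makes `F` drop by at least `(μ/2) t(1-t)‖δ‖²`; since `θ̂(𝟙)` minimizes
`F + f`, `f` must rise by at least as much. Dividing by `t` and letting `t → 0⁺` gives
`(μ/2)‖δ‖² ≤ ⟪∇f(θ̂(𝟙)), δ⟫ ≤ ‖∇f(θ̂(𝟙))‖ ‖δ‖`.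
-/

open Filter Set Topology InnerProductSpace

theorem HasDerivAt.le_of_mul_mul_one_sub_le_sub {φ : ℝ → ℝ} {φ' c : ℝ} (hφ : HasDerivAt φ φ' 0)
    (hc : ∀ t ∈ Ioo (0 : ℝ) 1, c * t * (1 - t) ≤ φ t - φ 0) : c ≤ φ' := by
  have hlim : Tendsto (fun t : ℝ ↦ c * (1 - t)) (𝓝[>] 0) (𝓝 c) := by
    have : Tendsto (fun t : ℝ ↦ c * (1 - t)) (𝓝 0) (𝓝 (c * (1 - 0))) :=
      (continuous_const.mul (continuous_const.sub continuous_id)).tendsto 0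
    simpa using this.mono_left nhdsWithin_le_nhds
  refine le_of_tendsto_of_tendsto hlim hφ.tendsto_slope_zero_right ?_
  filter_upwards [Ioo_mem_nhdsGT one_pos] with t ht
  rw [zero_add, smul_eq_mul, le_inv_mul_iff₀ ht.1]
  linarith [hc t ht]

theorem StrongConvexOn.mul_sq_norm_le_sub_of_isMinOn_add {E : Type*} [NormedAddCommGroup E]
    [NormedSpace ℝ E] {s : Set E} {μ : ℝ} {F f : E → ℝ}
    {x y : E} (hF : StrongConvexOn s μ F) (hx : x ∈ s) (hy : y ∈ s) (hFy : F y ≤ F x)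
    (hmin : IsMinOn (F + f) s x) {t : ℝ} (ht₀ : 0 ≤ t) (ht₁ : t ≤ 1) :
    μ / 2 * t * (1 - t) * ‖y - x‖ ^ 2 ≤ f (x + t • (y - x)) - f x := by
  have hseg : (1 - t) • x + t • y = x + t • (y - x) := by
    rw [smul_sub, sub_smul, one_smul]; abel
  have hconv := hF.2 hx hy (sub_nonneg.2 ht₁) ht₀ (sub_add_cancel 1 t)
  rw [hseg, norm_sub_rev, smul_eq_mul, smul_eq_mul] at hconv
  have hxmin : F x + f x ≤ F (x + t • (y - x)) + f (x + t • (y - x)) :=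
    hmin (hseg ▸ hF.1 hx hy (sub_nonneg.2 ht₁) ht₀ (sub_add_cancel 1 t))
  nlinarith

section InnerProduct

variable {E : Type*} [NormedAddCommGroup E] [InnerProductSpace ℝ E] [CompleteSpace E]

theorem StrongConvexOn.mul_sq_norm_le_inner_of_isMinOn_add {s : Set E} {μ : ℝ} {F f : E → ℝ}
    {x y g : E} (hF : StrongConvexOn s μ F) (hx : x ∈ s) (hy : y ∈ s) (hFy : F y ≤ F x)
    (hmin : IsMinOn (F + f) s x) (hf : HasGradientAt f g x) :
    μ / 2 * ‖y - x‖ ^ 2 ≤ ⟪g, y - x⟫_ℝ := by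
  have hline : HasDerivAt (fun t : ℝ ↦ x + t • (y - x)) (y - x) 0 := by
    simpa using ((hasDerivAt_id (0 : ℝ)).smul_const (y - x)).const_add x
  have hderiv : HasDerivAt (fun t : ℝ ↦ f (x + t • (y - x))) ⟪g, y - x⟫_ℝ 0 :=
    hf.hasFDerivAt.comp_hasDerivAt_of_eq (0 : ℝ) hline (by simp)
  refine hderiv.le_of_mul_mul_one_sub_le_sub fun t ht ↦ ?_
  have hrise := hF.mul_sq_norm_le_sub_of_isMinOn_add hx hy hFy hmin ht.1.le ht.2.le
  simp only [zero_smul, add_zero]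
  linarith

theorem StrongConvexOn.norm_sub_le_of_isMinOn_add {s : Set E} {μ : ℝ} {F f : E → ℝ}
    {x y g : E} (hμ : 0 < μ) (hF : StrongConvexOn s μ F) (hx : x ∈ s) (hy : y ∈ s)
    (hFy : F y ≤ F x) (hmin : IsMinOn (F + f) s x) (hf : HasGradientAt f g x) :
    ‖y - x‖ ≤ 2 / μ * ‖g‖ := by
  have hkey := (hF.mul_sq_norm_le_inner_of_isMinOn_add hx hy hFy hmin hf).trans
    (real_inner_le_norm g (y - x))
  rw [div_mul_eq_mul_div, le_div_iff₀ hμ]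
  rcases (norm_nonneg (y - x)).eq_or_lt with h0 | h0
  · rw [← h0, zero_mul]; positivity
  · nlinarith

end InnerProduct

theorem Fintype.sum_ite_eq_zero_else_one_mul_add {ι R : Type*} [Fintype ι] [DecidableEq ι]
    [NonAssocSemiring R] (a : ι → R) (i : ι) :
    ∑ j, (if j = i then 0 else 1) * a j + a i = ∑ j, a j := by
  simp [ite_mul, Finset.sum_ite, Finset.filter_ne', Finset.sum_erase_add]

theorem loo_minimizer_closeness_general
    {d n : ℕ} (hn : 0 < n) {Z : Type*} (z : Fin n → Z)
    {μ lam : ℝ} (hμ : 0 < μ)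
    (ℓ : Z → EuclideanSpace ℝ (Fin d) → ℝ)
    (π : EuclideanSpace ℝ (Fin d) → ℝ)
    (gradℓ : Z → EuclideanSpace ℝ (Fin d) → EuclideanSpace ℝ (Fin d))
    (hgrad : ∀ (i : Fin n) θ, HasGradientAt (fun θ' => (1 / (n : ℝ)) * ℓ (z i) θ')
      ((1 / (n : ℝ)) • gradℓ (z i) θ) θ)
    (L : (Fin n → ℝ) → EuclideanSpace ℝ (Fin d) → ℝ)
    (hLdef : ∀ w θ, L w θ = (1 / (n : ℝ)) * ∑ i, w i * ℓ (z i) θ + lam * π θ)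
    (θ1 : EuclideanSpace ℝ (Fin d))
    (hθ1 : ∀ θ, L (fun _ => 1) θ1 ≤ L (fun _ => 1) θ)
    (θloo : Fin n → EuclideanSpace ℝ (Fin d))
    (hconvloo : ∀ i : Fin n, StrongConvexOn Set.univ μ (L fun j => if j = i then 0 else 1))
    (hθloo : ∀ (i : Fin n) θ,
      L (fun j => if j = i then 0 else 1) (θloo i) ≤ L (fun j => if j = i then 0 else 1) θ) :
    ∀ i : Fin n,
      ‖θloo i - θ1‖ ≤ 2 / (n * μ) * ‖gradℓ (z i) θ1‖ ∧
      ‖θloo i - θ1‖ ≤ 2 / μ *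
        Finset.univ.sup'
          (Finset.univ_nonempty_iff.mpr (Fin.pos_iff_nonempty.mp hn))
          (fun j => ‖(1 / (n : ℝ)) • gradℓ (z j) θ1‖) := by
  intro i
  set F := L fun j => if j = i then 0 else 1
  set f := fun θ ↦ (1 / (n : ℝ)) * ℓ (z i) θ
  have hsplit : L (fun _ => 1) = F + f := by
    ext θ
    simp only [F, f, Pi.add_apply, hLdef, one_mul]
    rw [← Fintype.sum_ite_eq_zero_else_one_mul_add (fun j ↦ ℓ (z j) θ) i]
    ring
  have hclose : ‖θloo i - θ1‖ ≤ 2 / μ * ‖(1 / (n : ℝ)) • gradℓ (z i) θ1‖ :=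
    (hconvloo i).norm_sub_le_of_isMinOn_add hμ (mem_univ _) (mem_univ _) (hθloo i θ1)
      (fun θ _ ↦ hsplit ▸ hθ1 θ) (hgrad i θ1)
  refine ⟨hclose.trans_eq ?_, hclose.trans ?_⟩
  · rw [norm_smul, Real.norm_of_nonneg (by positivity)]
    field_simp
  · exact mul_le_mul_of_nonneg_left
      (Finset.le_sup' (fun j ↦ ‖(1 / (n : ℝ)) • gradℓ (z j) θ1‖) (Finset.mem_univ i))
      (by positivity)

/-- **Closeness of the full-data and leave-one-out minimizers** in weighted
empirical risk minimization.  If each `θ ↦ (1/n) ℓ (z i) θ` is differentiable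
(with gradient `gradℓ (z i) θ`) and both `L(·, 𝟙)` and `L(·, 𝟙^{n∖i})` are
`μ`-strongly convex with minimizers `θ1` and `θloo i`, then
`‖θloo i - θ1‖ ≤ (2/(nμ)) ‖∇ℓ(z_i, θ1)‖`, and in particular
`‖θloo i - θ1‖ ≤ (2/μ) max_j ‖(1/n) ∇ℓ(z_j, θ1)‖`. -/
theorem loo_minimizer_closeness
    {d n : ℕ} (hn : 0 < n) {Z : Type*} (z : Fin n → Z)
    {μ lam : ℝ} (hμ : 0 < μ) (hlam : 0 ≤ lam)
    (ℓ : Z → EuclideanSpace ℝ (Fin d) → ℝ)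
    (π : EuclideanSpace ℝ (Fin d) → ℝ)
    (gradℓ : Z → EuclideanSpace ℝ (Fin d) → EuclideanSpace ℝ (Fin d))
    (hgrad : ∀ (i : Fin n) θ, HasGradientAt (fun θ' => (1 / (n : ℝ)) * ℓ (z i) θ')
      ((1 / (n : ℝ)) • gradℓ (z i) θ) θ)
    (L : (Fin n → ℝ) → EuclideanSpace ℝ (Fin d) → ℝ)
    (hLdef : ∀ w θ, L w θ = (1 / (n : ℝ)) * ∑ i, w i * ℓ (z i) θ + lam * π θ)
    (θ1 : EuclideanSpace ℝ (Fin d))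
    (hconv1 : StrongConvexOn Set.univ μ (L fun _ => 1))
    (hθ1 : ∀ θ, L (fun _ => 1) θ1 ≤ L (fun _ => 1) θ)
    (θloo : Fin n → EuclideanSpace ℝ (Fin d))
    (hconvloo : ∀ i : Fin n, StrongConvexOn Set.univ μ (L fun j => if j = i then 0 else 1))
    (hθloo : ∀ (i : Fin n) θ,
      L (fun j => if j = i then 0 else 1) (θloo i) ≤ L (fun j => if j = i then 0 else 1) θ) :
    ∀ i : Fin n,
      ‖θloo i - θ1‖ ≤ 2 / (n * μ) * ‖gradℓ (z i) θ1‖ ∧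
      ‖θloo i - θ1‖ ≤ 2 / μ *
        Finset.univ.sup'
          (Finset.univ_nonempty_iff.mpr (Fin.pos_iff_nonempty.mp hn))
          (fun j => ‖(1 / (n : ℝ)) • gradℓ (z j) θ1‖) :=
  loo_minimizer_closeness_general hn z hμ ℓ π gradℓ hgrad L hLdef θ1 hθ1 θloo hconvloo hθloo
end
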